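/- arXiv:1305.7050 — 2 statements merged into one kernel-verified Lean document; each statement's English description precedes it below -/
import Mathlib

section
/- For all λ ≥ 0, δ > 0 and k ∈ ℕ with b = k·δ, the digitisation error satisfies 1 − e^{-λ b}·(1 + λδ)^k ≤ (λ²·δ·b)/2. -/
/-! Writing `a = e^{-λδ}(1 + λδ)`, the quantity `e^{-λb}(1 + λδ)^k` is `a^k`. Bernoulli's inequality
gives `1 - a^k ≤ k(1 - a)`, and `1 - a ≤ (λδ)^2 / 2`, so the error is at most `k(λδ)^2/2 = λ^2 δ b / 2`. -/

open Real

lemma hasDerivAt_exp_neg_mul_one_add_add_sq_div_two (y : ℝ) :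
    HasDerivAt (fun y => exp (-y) * (1 + y) + y ^ 2 / 2) (y * (1 - exp (-y))) y := by
  have h := (((hasDerivAt_neg' y).exp.mul ((hasDerivAt_id' y).const_add 1)).add
    ((hasDerivAt_pow 2 y).div_const 2))
  exact h.congr_deriv (by ring)

lemma one_sub_exp_neg_mul_one_add_le_sq_div_two {x : ℝ} (hx : 0 ≤ x) :
    1 - exp (-x) * (1 + x) ≤ x ^ 2 / 2 := by
  -- `y` and `1 - e^{-y}` always have the same sign
  have hmono : Monotone fun y => exp (-y) * (1 + y) + y ^ 2 / 2 :=
    monotone_of_hasDerivAt_nonneg hasDerivAt_exp_neg_mul_one_add_add_sq_div_two fun y =>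
      mul_nonneg_iff.mpr <| by
        rcases le_total 0 y with hy | hy
        · exact Or.inl ⟨hy, by simpa using exp_le_one_iff.mpr (neg_nonpos.mpr hy)⟩
        · exact Or.inr ⟨hy, by simpa using one_le_exp_iff.mpr (neg_nonneg.mpr hy)⟩
  simpa [add_comm] using hmono hx

theorem digitisation_error_bound (lam δ b : ℝ) (hlam : 0 ≤ lam) (hδ : 0 < δ)
    (k : ℕ) (hb : b = k * δ) :
    1 - Real.exp (-lam * b) * (1 + lam * δ) ^ k ≤ lam ^ 2 * δ * b / 2 := by
  have hx : 0 ≤ lam * δ := mul_nonneg hlam hδ.le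
  set a := exp (-(lam * δ)) * (1 + lam * δ)
  have hpow : exp (-lam * b) * (1 + lam * δ) ^ k = a ^ k := by
    rw [mul_pow, ← exp_nat_mul, hb]
    ring_nf
  have hbernoulli : 1 + k * (a - 1) ≤ a ^ k := by
    simpa using one_add_mul_le_pow (a := a - 1) (by nlinarith [exp_pos (-(lam * δ))]) k
  have hstep : 1 - a ≤ (lam * δ) ^ 2 / 2 := one_sub_exp_neg_mul_one_add_le_sq_div_two hx
  calc 1 - exp (-lam * b) * (1 + lam * δ) ^ k ≤ k * (1 - a) := by linarith
    _ ≤ k * ((lam * δ) ^ 2 / 2) := by gcongr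
    _ = lam ^ 2 * δ * b / 2 := by rw [hb]; ring
end

section
/- Minimum over actions of expected costs yields a fixpoint inequality certificate: let S be a finite set, Act a finite nonempty set, P : S × Act × S → ℝ≥0 with Σ_{s'} P(s,α,s') = 1 for all s, α, and c₁, c₂ : S × Act → ℝ≥0. If reals k and (x_s)_{s∈S} satisfy x_s ≤ c₁(s,α) − k·c₂(s,α) + Σ_{s'} P(s,α,s')·x_{s'} for all s ∈ S and α ∈ Act, then for any stationary policy D : S → Act and any n ∈ ℕ and initial state s₀, along expectations: x_{s₀} ≤ E[Σ_{i=0}^{n−1} (c₁(s_i, D(s_i)) − k·c₂(s_i, D(s_i)))] + E[x_{s_n}], where the expectation is over the Markov chain induced by P and D started at s₀. -/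
/-- Telescoping inequality certificate for the long-run ratio LP:
expectations over the Markov chain induced by `P` and stationary policy `D`
are expressed via the transition operator `T g s = ∑ s', P s (D s) s' * g s'`. -/
theorem lp_certificate_telescoping {S A : Type*} [Fintype S] [Fintype A] [Nonempty A]
    (P : S → A → S → ℝ)
    (hP0 : ∀ s α s', 0 ≤ P s α s')
    (hP1 : ∀ s α, ∑ s', P s α s' = 1)
    (c₁ c₂ : S → A → ℝ) (hc₁ : ∀ s α, 0 ≤ c₁ s α) (hc₂ : ∀ s α, 0 ≤ c₂ s α)
    (k : ℝ) (x : S → ℝ)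
    (hx : ∀ s α, x s ≤ c₁ s α - k * c₂ s α + ∑ s', P s α s' * x s')
    (D : S → A)
    (T : (S → ℝ) → S → ℝ)
    (hT : ∀ g s, T g s = ∑ s', P s (D s) s' * g s')
    (n : ℕ) (s₀ : S) :
    x s₀ ≤
      (∑ i ∈ Finset.range n,
        (T^[i] (fun s => c₁ s (D s) - k * c₂ s (D s))) s₀) + (T^[n] x) s₀ := by
  set c : S → ℝ := fun s => c₁ s (D s) - k * c₂ s (D s) with hc
  -- monotonicity of T iterates
  have mono : ∀ (m : ℕ) (f g : S → ℝ), (∀ s, f s ≤ g s) → ∀ s, T^[m] f s ≤ T^[m] g s := by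
    intro m
    induction m with
    | zero => intro f g h s; simpa using h s
    | succ m ih =>
      intro f g h s
      rw [Function.iterate_succ_apply]
      exact ih (T f) (T g) (fun t => by
        rw [hT, hT]
        exact Finset.sum_le_sum fun s' _ =>
          mul_le_mul_of_nonneg_left (h s') (hP0 t (D t) s')) s
  -- additivity of T iterates
  have add : ∀ (m : ℕ) (f g : S → ℝ) (s : S),
      T^[m] (fun t => f t + g t) s = T^[m] f s + T^[m] g s := by
    intro m
    induction m with
    | zero => intro f g s; simp
    | succ m ih =>
      intro f g s
      rw [Function.iterate_succ_apply, Function.iterate_succ_apply,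
        Function.iterate_succ_apply]
      have : T (fun t => f t + g t) = fun t => T f t + T g t := by
        funext t
        rw [hT, hT, hT, ← Finset.sum_add_distrib]
        exact Finset.sum_congr rfl fun s' _ => by ring
      rw [this]
      exact ih (T f) (T g) s
  have key : ∀ s, x s ≤ c s + T x s := by
    intro s
    rw [hT]
    exact hx s (D s)
  induction n with
  | zero => simp
  | succ n ih =>
    rw [Finset.sum_range_succ]
    have h1 : T^[n] x s₀ ≤ T^[n] c s₀ + T^[n+1] x s₀ := by
      have := mono n x (fun t => c t + T x t) key s₀
      rw [add n c (T x) s₀] at this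
      rwa [Function.iterate_succ_apply]
    linarith
end
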